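/- Let μ₁, μ₂ ≥ 1 and suppose α : Fin μ₁ → ℝ and β : Fin μ₂ → ℝ are nondecreasing families satisfying the variance identities (1/μ₁)∑_i (α(i) - c₁)² = (α_max - α_min)/12 and (1/μ₂)∑_j (β(j) - c₂)² = (β_max - β_min)/12, where c₁, c₂ are the respective means. Then the family γ(i,j) := α(i) + β(j) + 1 (of size μ₁μ₂, with mean c₁ + c₂ + 1, maximum α_max + β_max + 1 and minimum α_min + β_min + 1) satisfies (1/(μ₁μ₂))∑_{i,j} (γ(i,j) - (c₁+c₂+1))² = (γ_max - γ_min)/12. -/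

import Mathlib

open Finset

section CenteredSums

variable {R ι κ : Type*} [CommRing R] [Fintype ι] [Fintype κ]

theorem sum_sub_eq_zero_of_sum_eq_card_mul {f : ι → R} {a : R}
    (hf : ∑ i, f i = Fintype.card ι * a) : ∑ i, (f i - a) = 0 := by
  rw [sum_sub_distrib, hf, sum_const, card_univ, nsmul_eq_mul, sub_self]

/-- The cross term is `(∑ i, (f i - a)) * ∑ j, (g j - b)`, so centring one family suffices. -/
theorem sum_sq_add_sub_add_of_centered (f : ι → R) (g : κ → R) {a b : R}
    (hf : ∑ i, (f i - a) = 0) :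
    ∑ p : ι × κ, (f p.1 + g p.2 - (a + b)) ^ 2
      = Fintype.card κ * ∑ i, (f i - a) ^ 2 + Fintype.card ι * ∑ j, (g j - b) ^ 2 := by
  have expand : ∀ p : ι × κ, (f p.1 + g p.2 - (a + b)) ^ 2
      = (f p.1 - a) ^ 2 + (g p.2 - b) ^ 2 + 2 * ((f p.1 - a) * (g p.2 - b)) :=
    fun p => by ring
  have cross : ∑ p : ι × κ, (f p.1 - a) * (g p.2 - b) = 0 := by
    simp only [Fintype.sum_prod_type]
    rw [← Fintype.sum_mul_sum, hf, zero_mul]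
  simp only [expand, sum_add_distrib, ← mul_sum, cross, mul_zero, add_zero,
    Fintype.sum_prod_type, sum_const, card_univ, nsmul_eq_mul]

end CenteredSums

/-- The variance identity Var = (max - min)/12 is preserved under the
Thom–Sebastiani join γ(i,j) = α(i) + β(j) + 1. -/
theorem variance_identity_join (μ₁ μ₂ : ℕ) (h₁ : 1 ≤ μ₁) (h₂ : 1 ≤ μ₂)
    (α : Fin μ₁ → ℝ) (β : Fin μ₂ → ℝ) (c₁ c₂ : ℝ)
    (hc₁ : ∑ i, α i = μ₁ * c₁)
    (hvarα : (1 / (μ₁ : ℝ)) * ∑ i, (α i - c₁) ^ 2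
      = (α ⟨μ₁ - 1, by omega⟩ - α ⟨0, by omega⟩) / 12)
    (hvarβ : (1 / (μ₂ : ℝ)) * ∑ j, (β j - c₂) ^ 2
      = (β ⟨μ₂ - 1, by omega⟩ - β ⟨0, by omega⟩) / 12) :
    (1 / ((μ₁ : ℝ) * μ₂)) * ∑ p : Fin μ₁ × Fin μ₂,
        (α p.1 + β p.2 + 1 - (c₁ + c₂ + 1)) ^ 2
      = ((α ⟨μ₁ - 1, by omega⟩ + β ⟨μ₂ - 1, by omega⟩ + 1)
          - (α ⟨0, by omega⟩ + β ⟨0, by omega⟩ + 1)) / 12 := by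
  have hμ₁ : (μ₁ : ℝ) ≠ 0 := by positivity
  have hμ₂ : (μ₂ : ℝ) ≠ 0 := by positivity
  have hα : ∑ i, (α i - c₁) = 0 :=
    sum_sub_eq_zero_of_sum_eq_card_mul (by rwa [Fintype.card_fin])
  simp only [add_sub_add_right_eq_sub, sum_sq_add_sub_add_of_centered α β hα,
    Fintype.card_fin]
  field_simp at hvarα hvarβ ⊢
  linear_combination (μ₂ : ℝ) * hvarα + (μ₁ : ℝ) * hvarβ
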